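/- arXiv:1910.01202 — 3 statements merged into one kernel-verified Lean document; each statement's English description precedes it below -/
import Mathlib

section
/- Let k be a field, n ≥ 2 an integer, and let f = x0·x1·l2···l_{n-1}·x2 ∈ k[x0,x1,x2] where each l_i is a linear form in the ideal (x0,x1). Then the three partial derivatives ∂f/∂x0, ∂f/∂x1, ∂f/∂x2 are, up to sign, the 2×2 minors of the 3×2 matrix M with first column (x0, x1, −n·x2)ᵀ and second column (0, x1·l2···l_{n-1}, −l2···l_{n-1}·x2 − x1·(∂/∂x1)(l2···l_{n-1})·x2)ᵀ. Specifically: x1·x2·l2···l_{n-1} + x0·x1·x2·(∂/∂x0)(l2···l_{n-1}) equals minus the minor of M omitting the first row, x0·x2·l2···l_{n-1} + x0·x1·x2·(∂/∂x1)(l2···l_{n-1}) equals the minor omitting the second row, and x0·x1·l2···l_{n-1} equals minus the minor omitting the third row. -/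
/-!
The product `q = l₂⋯l_{n-1}` is homogeneous of degree `n - 2` and involves only `x₀, x₁`, so
Euler's identity reads `x₀ ∂₀q + x₁ ∂₁q = (n - 2) q`. With the product rule this turns `∂₀f` into
the first minor; the other two identities are the product rule alone.
-/

open MvPolynomial

namespace MvPolynomial

variable {σ R : Type*} [CommRing R]

theorem pderiv_eq_zero_of_mem_supported {s : Set σ} {i : σ} {p : MvPolynomial σ R}
    (hp : p ∈ supported R s) (hi : i ∉ s) : pderiv i p = 0 :=
  pderiv_eq_zero_of_notMem_vars fun h ↦ hi (mem_supported.1 hp h)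

variable {ι : Type*} (s : Finset ι) (a b : ι → R) (i j : σ)

theorem isHomogeneous_prod_C_mul_X_add_C_mul_X :
    (∏ l ∈ s, (C (a l) * X i + C (b l) * X j)).IsHomogeneous s.card := by
  simpa using IsHomogeneous.prod s _ (fun _ ↦ 1) fun l _ ↦
    (isHomogeneous_C_mul_X (a l) i).add (isHomogeneous_C_mul_X (b l) j)

theorem prod_C_mul_X_add_C_mul_X_mem_supported :
    ∏ l ∈ s, (C (a l) * X i + C (b l) * X j) ∈ supported R {i, j} :=
  Subalgebra.prod_mem _ fun l _ ↦
    add_mem (mul_mem (Subalgebra.algebraMap_mem _ _) (Algebra.subset_adjoin ⟨i, by simp, rfl⟩))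
      (mul_mem (Subalgebra.algebraMap_mem _ _) (Algebra.subset_adjoin ⟨j, by simp, rfl⟩))

end MvPolynomial

/-- For `f = x0 · x1 · l2⋯l_{n-1} · x2` with each `l_i` a linear form in `(x0, x1)`,
the three partial derivatives of `f` are, up to sign, the `2×2` minors of the matrix `M`
with first column `(x0, x1, -n·x2)ᵀ` and second column
`(0, x1·q, -q·x2 - x1·(∂q/∂x1)·x2)ᵀ`, where `q = l2⋯l_{n-1}`. -/
theorem stmt0 {k : Type*} [Field k] (n : ℕ) (hn : 2 ≤ n)
    (a b : Fin (n - 2) → k)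
    (q f : MvPolynomial (Fin 3) k)
    (hq : q = ∏ i, (C (a i) * X 0 + C (b i) * X 1))
    (hf : f = X 0 * X 1 * q * X 2) :
    -- partial derivative in x0 : (up to sign) the minor omitting the first row
    pderiv (0 : Fin 3) f
      = X 1 * (-(q * X 2) - X 1 * pderiv (1 : Fin 3) q * X 2)
        - (X 1 * q) * (-((n : MvPolynomial (Fin 3) k) * X 2)) ∧
    -- partial derivative in x1 : (up to sign) the minor omitting the second row
    pderiv (1 : Fin 3) f
      = -(X 0 * (-(q * X 2) - X 1 * pderiv (1 : Fin 3) q * X 2)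
          - 0 * (-((n : MvPolynomial (Fin 3) k) * X 2))) ∧
    -- partial derivative in x2 : (up to sign) the minor omitting the third row
    pderiv (2 : Fin 3) f = X 0 * (X 1 * q) - 0 * X 1 := by
  have hq2 : pderiv 2 q = 0 :=
    pderiv_eq_zero_of_mem_supported (hq ▸ prod_C_mul_X_add_C_mul_X_mem_supported _ a b 0 1)
      (by decide)
  have euler : X 0 * pderiv 0 q + X 1 * pderiv 1 q = ((n : MvPolynomial (Fin 3) k) - 2) * q := by
    have h := (hq ▸ isHomogeneous_prod_C_mul_X_add_C_mul_X Finset.univ a b 0 1).sum_X_mul_pderiv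
    simpa [Fin.sum_univ_three, hq2, nsmul_eq_mul, Nat.cast_sub hn] using h
  subst hf
  simp only [pderiv_mul, pderiv_X, Pi.single_apply, Fin.reduceEq, ↓reduceIte, hq2]
  exact ⟨by linear_combination X 1 * X 2 * euler, by ring, by ring⟩
end

section
/- Let k be a field, n ≥ 2, and let f = x0·x1·l2···l_{n-1}·x2 where x0, x1, l2,…,l_{n-1} are pairwise non-proportional linear forms in the ideal (x0,x1) ⊂ k[x0,x1,x2]. Then the ideal I generated by the three partial derivatives of f has height at least 2; equivalently, the three partial derivatives of f have no common irreducible factor. -/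
/-!
Write `f = P · x2`, where `P = x0 · x1 · ∏ lᵢ` is a product of pairwise non-proportional linear
forms in `x0, x1`. Since `∂₂ f = P`, a prime factor of a common divisor of the partials is one of
these forms `ℓ = c x0 + d x1`, say `P = ℓ · R`. From `∂ⱼ f = ∂ⱼ ℓ · R x2 + ℓ · ∂ⱼ (R x2)` for
`j = 0, 1`, and since one of the constants `∂₀ ℓ = c`, `∂₁ ℓ = d` is non-zero, `ℓ` divides `R x2`.
This is impossible: `R x2` does not vanish at the zero `(d, -c, 1)` of `ℓ`.
-/

open MvPolynomial

theorem MvPolynomial.not_dvd_of_eval_eq_zero {σ R : Type*} [CommRing R] {p q : MvPolynomial σ R}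
    (v : σ → R) (hp : eval v p = 0) (hq : eval v q ≠ 0) : ¬ p ∣ q :=
  fun h => hq (zero_dvd_iff.mp (hp ▸ map_dvd (eval v) h))

theorem MvPolynomial.dvd_pderiv_mul_iff {σ R : Type*} [CommRing R] (i : σ)
    {p q : MvPolynomial σ R} : p ∣ pderiv i (p * q) ↔ p ∣ pderiv i p * q := by
  rw [pderiv_mul, add_comm, dvd_add_right (dvd_mul_right _ _)]

section LinForm

variable {k : Type*} [Field k]

noncomputable def linForm (c d : k) : MvPolynomial (Fin 3) k := C c * X 0 + C d * X 1

@[simp] theorem eval_linForm (v : Fin 3 → k) (c d : k) :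
    eval v (linForm c d) = c * v 0 + d * v 1 := by
  simp [linForm]

@[simp] theorem pderiv_zero_linForm (c d : k) : pderiv 0 (linForm c d) = C c := by
  simp [linForm, pderiv_X]

@[simp] theorem pderiv_one_linForm (c d : k) : pderiv 1 (linForm c d) = C d := by
  simp [linForm, pderiv_X]

@[simp] theorem pderiv_two_linForm (c d : k) : pderiv 2 (linForm c d) = 0 := by
  simp [linForm, pderiv_X]

theorem pderiv_two_prod_linForm {ι : Type*} (s : Finset ι) (c d : ι → k) :
    pderiv 2 (∏ i ∈ s, linForm (c i) (d i)) = 0 :=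
  Finset.prod_induction _ (fun p => pderiv 2 p = 0) (fun p q hp hq => by simp [hp, hq])
    (pderiv 2).map_one_eq_zero (fun i _ => pderiv_two_linForm _ _)

theorem linForm_ne_zero {c d : k} (h : c ≠ 0 ∨ d ≠ 0) : linForm c d ≠ 0 := by
  intro h0
  have h1 := congrArg (eval ![1, 0, 0]) h0
  have h2 := congrArg (eval ![0, 1, 0]) h0
  simp at h1 h2
  tauto

theorem totalDegree_linForm {c d : k} (h : c ≠ 0 ∨ d ≠ 0) : (linForm c d).totalDegree = 1 := by
  refine le_antisymm ?_ ?_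
  · refine (totalDegree_add _ _).trans (max_le ?_ ?_) <;>
      exact (totalDegree_mul _ _).trans (by simp)
  · rw [Nat.one_le_iff_ne_zero]
    intro h0
    apply linForm_ne_zero h
    rw [totalDegree_eq_zero_iff_eq_C.mp h0]
    simp [linForm]

theorem prime_linForm {c d : k} (h : c ≠ 0 ∨ d ≠ 0) : Prime (linForm c d) := by
  refine (irreducible_of_totalDegree_eq_one (totalDegree_linForm h) fun x hx => ?_).prime
  refine isUnit_iff_ne_zero.mpr fun hx0 => linForm_ne_zero h ?_
  ext m
  simpa [hx0] using hx m

theorem linForm_dvd_of_dvd_pderiv_mul {c d : k} (h : c ≠ 0 ∨ d ≠ 0) {q : MvPolynomial (Fin 3) k}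
    (h0 : linForm c d ∣ pderiv 0 (linForm c d * q))
    (h1 : linForm c d ∣ pderiv 1 (linForm c d * q)) : linForm c d ∣ q := by
  rw [dvd_pderiv_mul_iff, pderiv_zero_linForm] at h0
  rw [dvd_pderiv_mul_iff, pderiv_one_linForm] at h1
  rcases h with hc | hd
  · exact (hc.isUnit.map C).dvd_mul_left.mp h0
  · exact (hd.isUnit.map C).dvd_mul_left.mp h1

theorem linForm_not_dvd_prod_mul_X_two {ι : Type*} {s : Finset ι} {c d : ι → k} {c₀ d₀ : k}
    (h : ∀ i ∈ s, c i * d₀ ≠ c₀ * d i) :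
    ¬ linForm c₀ d₀ ∣ (∏ i ∈ s, linForm (c i) (d i)) * X 2 := by
  refine not_dvd_of_eval_eq_zero ![d₀, -c₀, 1] (by simp [mul_comm]) ?_
  simp only [map_mul, map_prod, eval_linForm, eval_X, Matrix.cons_val_zero, Matrix.cons_val_one,
    Matrix.cons_val, mul_one]
  refine Finset.prod_ne_zero_iff.mpr fun i hi h0 => h i hi ?_
  linear_combination h0

theorem isUnit_of_dvd_pderiv_prod_linForm_mul_X_two {ι : Type*} [Fintype ι] [DecidableEq ι]
    {c d : ι → k} (hcd : ∀ i, c i ≠ 0 ∨ d i ≠ 0)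
    (hprop : Pairwise fun i j => c i * d j ≠ c j * d i) {g : MvPolynomial (Fin 3) k}
    (h0 : g ∣ pderiv 0 ((∏ i, linForm (c i) (d i)) * X 2))
    (h1 : g ∣ pderiv 1 ((∏ i, linForm (c i) (d i)) * X 2))
    (h2 : g ∣ pderiv 2 ((∏ i, linForm (c i) (d i)) * X 2)) : IsUnit g := by
  set P := ∏ i, linForm (c i) (d i)
  have hP0 : P ≠ 0 := Finset.prod_ne_zero_iff.mpr fun i _ => linForm_ne_zero (hcd i)
  have hgP : g ∣ P := by simpa [P, pderiv_two_prod_linForm] using h2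
  by_contra hg
  obtain ⟨p, hp, hpg⟩ := WfDvdMonoid.exists_irreducible_factor hg (ne_zero_of_dvd_ne_zero hP0 hgP)
  obtain ⟨j, -, hpj⟩ := hp.prime.exists_mem_finset_dvd (hpg.trans hgP)
  have hjg : linForm (c j) (d j) ∣ g :=
    (hp.associated_of_dvd (prime_linForm (hcd j)).irreducible hpj).symm.dvd.trans hpg
  have hsplit : P * X 2 =
      linForm (c j) (d j) * ((∏ i ∈ Finset.univ.erase j, linForm (c i) (d i)) * X 2) := by
    rw [← mul_assoc, Finset.mul_prod_erase Finset.univ (fun i => linForm (c i) (d i))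
      (Finset.mem_univ j)]
  rw [hsplit] at h0 h1
  exact linForm_not_dvd_prod_mul_X_two (fun i hi => hprop (Finset.ne_of_mem_erase hi))
    (linForm_dvd_of_dvd_pderiv_mul (hcd j) (hjg.trans h0) (hjg.trans h1))

end LinForm

theorem stmt2_general {k : Type*} [Field k] (n : ℕ)
    (a b : Fin (n - 2) → k)
    -- each `l_i = a_i·x0 + b_i·x1` is non-proportional to `x1` and to `x0`
    (ha : ∀ i, a i ≠ 0) (hb : ∀ i, b i ≠ 0)
    -- the `l_i` are pairwise non-proportional
    (hab : ∀ i j, i ≠ j → a i * b j ≠ a j * b i)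
    (f : MvPolynomial (Fin 3) k)
    (hf : f = X 0 * X 1 * (∏ i, (C (a i) * X 0 + C (b i) * X 1)) * X 2) :
    ∀ g : MvPolynomial (Fin 3) k,
      g ∣ pderiv (0 : Fin 3) f → g ∣ pderiv (1 : Fin 3) f → g ∣ pderiv (2 : Fin 3) f →
        IsUnit g := by
  classical
  intro g h0 h1 h2
  -- `none ↦ x0`, `some none ↦ x1`, `some (some i) ↦ lᵢ`
  let c : Option (Option (Fin (n - 2))) → k := fun o => o.elim 1 fun o => o.elim 0 a
  let d : Option (Option (Fin (n - 2))) → k := fun o => o.elim 0 fun o => o.elim 1 b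
  have hcd : ∀ i, c i ≠ 0 ∨ d i ≠ 0 := by rintro (_ | _ | i) <;> simp [c, d, ha]
  have hprop : Pairwise fun i j => c i * d j ≠ c j * d i := by
    rintro (_ | _ | i) (_ | _ | j) hij <;>
      simp_all [c, d, fun i => (ha i).symm, fun i => (hb i).symm]
  have hf' : f = (∏ i, linForm (c i) (d i)) * X 2 := by
    simp [hf, Fintype.prod_option, c, d, linForm, mul_assoc]
  rw [hf'] at h0 h1 h2
  exact isUnit_of_dvd_pderiv_prod_linForm_mul_X_two hcd hprop h0 h1 h2

/-- For `f = x0·x1·l2⋯l_{n-1}·x2` with `x0, x1, l2, …, l_{n-1}` pairwise non-proportional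
linear forms in `(x0, x1)`, the three partial derivatives of `f` have no common non-unit
factor (equivalently, the jacobian ideal of `f` has height at least `2`). -/
theorem stmt2 {k : Type*} [Field k] (n : ℕ) (hn : 2 ≤ n)
    (a b : Fin (n - 2) → k)
    -- each `l_i = a_i·x0 + b_i·x1` is non-proportional to `x1` and to `x0`
    (ha : ∀ i, a i ≠ 0) (hb : ∀ i, b i ≠ 0)
    -- the `l_i` are pairwise non-proportional
    (hab : ∀ i j, i ≠ j → a i * b j ≠ a j * b i)
    (f : MvPolynomial (Fin 3) k)
    (hf : f = X 0 * X 1 * (∏ i, (C (a i) * X 0 + C (b i) * X 1)) * X 2) :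
    ∀ g : MvPolynomial (Fin 3) k,
      g ∣ pderiv (0 : Fin 3) f → g ∣ pderiv (1 : Fin 3) f → g ∣ pderiv (2 : Fin 3) f →
        IsUnit g :=
  stmt2_general n a b ha hb hab f hf
end

section
/- Let k be a field of characteristic 3 and f = x0·(x1² + x0·x2)·(2·x1² + x0·x2) ∈ k[x0,x1,x2]. Then the ideal generated by the partial derivatives ∂f/∂x0, ∂f/∂x1, ∂f/∂x2 has height at least 2, i.e., the three partial derivatives admit no common non-unit factor. -/
open MvPolynomial

lemma prime_X_fin3 {k : Type*} [Field k] (i : Fin 3) :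
    Prime (X i : MvPolynomial (Fin 3) k) := by
  have h0 : Prime (X 0 : MvPolynomial (Fin 3) k) := by
    rw [← MulEquiv.prime_iff (MvPolynomial.finSuccEquiv k 2).toMulEquiv]
    have : (MvPolynomial.finSuccEquiv k 2).toMulEquiv (X 0) = Polynomial.X := by
      simp [finSuccEquiv_X_zero]
    rw [this]
    exact Polynomial.prime_X
  rw [show (X i : MvPolynomial (Fin 3) k) = renameEquiv k (Equiv.swap 0 i) (X 0) by simp]
  exact (MulEquiv.prime_iff (renameEquiv k (Equiv.swap 0 i)).toMulEquiv).mpr h0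

lemma X_not_dvd_X {k : Type*} [Field k] (i j : Fin 3) (hij : i ≠ j) :
    ¬ (X i : MvPolynomial (Fin 3) k) ∣ X j := by
  rintro ⟨c, hc⟩
  have := congrArg (eval (fun m : Fin 3 => if m = i then 0 else 1)) hc
  simp [hij.symm] at this

/-- In characteristic `3`, the partial derivatives of
`f = x0·(x1² + x0·x2)·(2·x1² + x0·x2)` have no common non-unit factor,
i.e. the ideal they generate has height at least `2`. -/
theorem stmt7 {k : Type*} [Field k] [CharP k 3]
    (f : MvPolynomial (Fin 3) k)
    (hf : f = X 0 * (X 1 ^ 2 + X 0 * X 2) * (2 * X 1 ^ 2 + X 0 * X 2)) :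
    ∀ g : MvPolynomial (Fin 3) k,
      g ∣ pderiv (0 : Fin 3) f → g ∣ pderiv (1 : Fin 3) f → g ∣ pderiv (2 : Fin 3) f →
        IsUnit g := by
  have h3 : (3 : MvPolynomial (Fin 3) k) = 0 := by
    exact_mod_cast CharP.cast_eq_zero (MvPolynomial (Fin 3) k) 3
  have h2 : ∀ i : Fin 3, pderiv i (2 : MvPolynomial (Fin 3) k) = 0 := fun i => by
    rw [← map_ofNat (C : k →+* MvPolynomial (Fin 3) k) 2, pderiv_C]
  have hd : pderiv (0 : Fin 3) f = 2 * X 1 ^ 4 ∧ pderiv (1 : Fin 3) f = 2 * X 0 * X 1 ^ 3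
      ∧ pderiv (2 : Fin 3) f = 2 * X 0 ^ 3 * X 2 := by
    subst hf
    refine ⟨?_, ?_, ?_⟩ <;>
      simp only [pderiv_mul, pderiv_X, map_add, map_mul, h2, Pi.single_apply] <;>
      norm_num [Fin.ext_iff]
    · linear_combination (2 * X 1 ^ 2 * X 0 * X 2 + X 0 ^ 2 * X 2 ^ 2) * h3
    · linear_combination (2 * X 0 * X 1 ^ 3 + 2 * X 0 ^ 2 * X 1 * X 2) * h3
    · linear_combination (X 0 ^ 2 * X 1 ^ 2) * h3
  obtain ⟨hd0, hd1, hd2⟩ := hd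
  intro g hg0 hg1 hg2
  rw [hd0] at hg0
  rw [hd2] at hg2
  -- 2 is a unit
  have hu2 : IsUnit (2 : MvPolynomial (Fin 3) k) := by
    rw [← map_ofNat (C : k →+* MvPolynomial (Fin 3) k) 2]
    apply IsUnit.map (C : k →+* MvPolynomial (Fin 3) k)
    apply isUnit_iff_ne_zero.mpr
    intro h
    have := (CharP.cast_eq_zero_iff k 3 2).mp (by exact_mod_cast h)
    omega
  have hg0' : g ∣ X 1 ^ 4 := hu2.dvd_mul_left.mp hg0
  have hg2' : g ∣ X 0 ^ 3 * X 2 := by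
    have : (2 : MvPolynomial (Fin 3) k) * (X 0 ^ 3 * X 2) = 2 * X 0 ^ 3 * X 2 := by ring
    exact hu2.dvd_mul_left.mp (this ▸ hg2)
  -- g divides a power of the prime X 1
  obtain ⟨i, _, hassoc⟩ := (dvd_prime_pow (prime_X_fin3 (k := k) 1) 4).mp hg0'
  rcases Nat.eq_zero_or_pos i with hi | hi
  · subst hi
    exact hassoc.symm.isUnit (by simp)
  · exfalso
    have hx1g : (X 1 : MvPolynomial (Fin 3) k) ∣ g := by
      obtain ⟨u, hu⟩ := hassoc.symm
      exact ⟨(X 1 : MvPolynomial (Fin 3) k) ^ (i - 1) * u, by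
        rw [← hu, ← mul_assoc, ← pow_succ', Nat.sub_add_cancel hi]⟩
    have hx1 : (X 1 : MvPolynomial (Fin 3) k) ∣ X 0 ^ 3 * X 2 := hx1g.trans hg2'
    rcases (prime_X_fin3 (k := k) 1).2.2 _ _ hx1 with h | h
    · exact X_not_dvd_X 1 0 (by decide) ((prime_X_fin3 (k := k) 1).dvd_of_dvd_pow h)
    · exact X_not_dvd_X 1 2 (by decide) h
end
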